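/- arXiv:2005.08666 — 2 statements merged into one kernel-verified Lean document; each statement's English description precedes it below -/
import Mathlib

section
/- Assume ω satisfies condition (ii). Then s₀ = 0, the improper integral d₀ := ∫₀¹ (−2Ω(p))^{-1/2} dp is finite, d(s) → d₀ as s → 0+, and R(s) → R₀ := d₀ − Ω(1) as s → 0+; in particular both d₀ and R₀ are finite. -/
/-! Since `Ω(0) = 0`, the difference quotient `Ω(p) / p` extends continuously to `p = 0` with
value `ω(0) ≠ 0`; being negative on `(0, 1]`, it is bounded above there by a negative constant,
i.e. `-2Ω(p) ≥ c p` with `c > 0`. Hence `(-2Ω(p))^{-1/2} = O(p^{-1/2})` is integrable, and it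
dominates `(s² - 2Ω(p))^{-1/2}` for every `s`, so dominated convergence gives `d(s) → d₀`. -/

open MeasureTheory Set Filter

noncomputable section

/-- `Omeg ω p = ∫₀^p ω(t) dt`, the primitive of the vorticity function. -/
def Omeg (ω : ℝ → ℝ) (p : ℝ) : ℝ := ∫ t in (0:ℝ)..p, ω t

/-- `s0 ω = sqrt (max_{p ∈ [0,1]} 2 Ω(p))`. -/
def s0 (ω : ℝ → ℝ) : ℝ := Real.sqrt (sSup ((fun p => 2 * Omeg ω p) '' Icc (0:ℝ) 1))

/-- `Hp ω p s = (s² − 2Ω(p))^{-1/2}`. -/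
def Hp (ω : ℝ → ℝ) (p s : ℝ) : ℝ := (Real.sqrt (s ^ 2 - 2 * Omeg ω p))⁻¹

/-- `Hfun ω p s = H(p; s) = ∫₀^p (s² − 2Ω(τ))^{-1/2} dτ`. -/
def Hfun (ω : ℝ → ℝ) (p s : ℝ) : ℝ := ∫ τ in (0:ℝ)..p, Hp ω τ s

/-- `dd ω s = d(s) = H(1; s)`. -/
def dd (ω : ℝ → ℝ) (s : ℝ) : ℝ := Hfun ω 1 s

/-- `RR ω s = R(s) = s²/2 − Ω(1) + d(s)`, the Bernoulli constant of the stream solution. -/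
def RR (ω : ℝ → ℝ) (s : ℝ) : ℝ := s ^ 2 / 2 - Omeg ω 1 + dd ω s

/-- `sigmaFun ω s r = σ(s; r)`. -/
def sigmaFun (ω : ℝ → ℝ) (s r : ℝ) : ℝ :=
  ∫ p in (0:ℝ)..1,
    (1 / (2 * (Hp ω p s) ^ 2) - Hfun ω p s - Omeg ω p + Omeg ω 1 + r) * Hp ω p s

/-- Partial derivative in the first (horizontal) variable `q`. -/
def dq (f : ℝ → ℝ → ℝ) (q p : ℝ) : ℝ := deriv (fun x => f x p) q

/-- Partial derivative in the second (vertical) variable `p`. -/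
def dp (f : ℝ → ℝ → ℝ) (q p : ℝ) : ℝ := deriv (fun y => f q y) p

/-- The height system with Bernoulli constant `r` on the strip `S = ℝ × [0,1]`. -/
structure HeightSol (ω : ℝ → ℝ) (r : ℝ) (h : ℝ → ℝ → ℝ) : Prop where
  smooth : ContDiff ℝ 2 (Function.uncurry h)
  hp_pos : ∀ q : ℝ, ∀ p ∈ Icc (0:ℝ) 1, 0 < dp h q p
  pde : ∀ q : ℝ, ∀ p ∈ Icc (0:ℝ) 1,
    (1 + (dq h q p) ^ 2) / (dp h q p) ^ 2 * dp (dp h) q p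
      - 2 * (dq h q p) / (dp h q p) * dp (dq h) q p
      + dq (dq h) q p - ω p * dp h q p = 0
  top : ∀ q : ℝ, (1 + (dq h q 1) ^ 2) / (2 * (dp h q 1) ^ 2) + h q 1 = r
  bot : ∀ q : ℝ, h q 0 = 0

/-- The flow force of a height function `h`, computed on the vertical line through `q`. -/
def flowForce (ω : ℝ → ℝ) (r : ℝ) (h : ℝ → ℝ → ℝ) (q : ℝ) : ℝ :=
  ∫ p in (0:ℝ)..1,
    ((1 - (dq h q p) ^ 2) / (2 * (dp h q p) ^ 2) - h q p - Omeg ω p + Omeg ω 1 + r) * dp h q p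

/-- `wfun ω s h = w^{(s)} = h − H(·; s)`. -/
def wfun (ω : ℝ → ℝ) (s : ℝ) (h : ℝ → ℝ → ℝ) (q p : ℝ) : ℝ := h q p - Hfun ω p s

/-- The flow force flux function `Φ^{(s)}`. -/
def Phi (ω : ℝ → ℝ) (s : ℝ) (h : ℝ → ℝ → ℝ) (q p : ℝ) : ℝ :=
  ∫ p' in (0:ℝ)..p,
    ((dp (wfun ω s h) q p') ^ 2 / (dp h q p' * (Hp ω p' s) ^ 2)
      - (dq (wfun ω s h) q p') ^ 2 / dp h q p')

/-- `h ∈ C^{2,γ}(S̄)`: `h` is twice continuously differentiable, all partial derivatives of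
order ≤ 2 are bounded on the strip, and the second-order derivatives are uniformly
γ-Hölder continuous on the strip. -/
def C2Holder (γ : ℝ) (h : ℝ → ℝ → ℝ) : Prop :=
  ContDiff ℝ 2 (Function.uncurry h) ∧
  (∀ g ∈ ([h, dq h, dp h, dq (dq h), dp (dq h), dp (dp h)] : List (ℝ → ℝ → ℝ)),
    ∃ M : ℝ, ∀ q : ℝ, ∀ p ∈ Icc (0:ℝ) 1, |g q p| ≤ M) ∧
  (∀ g ∈ ([dq (dq h), dp (dq h), dp (dp h)] : List (ℝ → ℝ → ℝ)),
    ∃ C : ℝ, ∀ q q' : ℝ, ∀ p ∈ Icc (0:ℝ) 1, ∀ p' ∈ Icc (0:ℝ) 1,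
      |g q p - g q' p'| ≤ C * Real.sqrt ((q - q') ^ 2 + (p - p') ^ 2) ^ γ)

end

open Topology

lemma exists_pos_mul_le_of_hasDerivAt {f : ℝ → ℝ} {f' b : ℝ} (hb : 0 < b) (hf : Continuous f)
    (hf0 : f 0 = 0) (hderiv : HasDerivAt f f' 0) (hf' : f' ≠ 0)
    (hpos : ∀ p ∈ Ioc 0 b, 0 < f p) :
    ∃ c > 0, ∀ p ∈ Ioc 0 b, c * p ≤ f p := by
  have hslope : ∀ p ≠ 0, dslope f 0 p = f p / p := fun p hp => by
    rw [dslope_of_ne f hp, slope_def_field, hf0, sub_zero, sub_zero]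
  have hcont : Continuous (dslope f 0) := continuousOn_univ.1 <|
    (continuousOn_dslope univ_mem).2 ⟨hf.continuousOn, hderiv.differentiableAt⟩
  have hslope_pos : ∀ p ∈ Ioc 0 b, 0 < dslope f 0 p := fun p hp => by
    rw [hslope p hp.1.ne']
    exact div_pos (hpos p hp) hp.1
  have hf'_pos : 0 < f' := by
    have hlim : Tendsto (dslope f 0) (𝓝[>] 0) (𝓝 f') := by
      have := (hcont.tendsto 0).mono_left (nhdsWithin_le_nhds (s := Ioi 0))
      rwa [dslope_same, hderiv.deriv] at this
    refine lt_of_le_of_ne (ge_of_tendsto hlim ?_) hf'.symm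
    filter_upwards [Ioo_mem_nhdsGT hb] with p hp using (hslope_pos p (Ioo_subset_Ioc_self hp)).le
  obtain ⟨x, hx, hmin⟩ := isCompact_Icc.exists_isMinOn (nonempty_Icc.2 hb.le) hcont.continuousOn
  refine ⟨dslope f 0 x, ?_, fun p hp => ?_⟩
  · rcases hx.1.eq_or_lt with rfl | hx0
    · rwa [dslope_same, hderiv.deriv]
    · exact hslope_pos x ⟨hx0, hx.2⟩
  · calc dslope f 0 x * p ≤ dslope f 0 p * p :=
          mul_le_mul_of_nonneg_right (hmin (Ioc_subset_Icc_self hp)) hp.1.le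
      _ = f p := by rw [hslope p hp.1.ne', div_mul_cancel₀ _ hp.1.ne']

lemma intervalIntegrable_inv_sqrt_of_mul_le {f : ℝ → ℝ} {c b : ℝ} (hb : 0 ≤ b) (hc : 0 < c)
    (hf : Measurable f) (hle : ∀ p ∈ Ioc 0 b, c * p ≤ f p) :
    IntervalIntegrable (fun p => (√(f p))⁻¹) volume 0 b := by
  refine ((intervalIntegral.intervalIntegrable_rpow' (r := -(1 / 2)) (by norm_num)).const_mul
    (√c)⁻¹).mono_fun hf.sqrt.inv.aestronglyMeasurable ?_
  rw [uIoc_of_le hb]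
  filter_upwards [ae_restrict_mem measurableSet_Ioc] with p hp
  have hcp : 0 < c * p := mul_pos hc hp.1
  rw [Real.norm_of_nonneg (by positivity),
    Real.norm_of_nonneg (mul_nonneg (by positivity) (Real.rpow_nonneg hp.1.le _)), Real.rpow_neg hp.1.le, ← Real.sqrt_eq_rpow, ← mul_inv, ← Real.sqrt_mul hc.le]
  exact inv_anti₀ (Real.sqrt_pos.2 hcp) (Real.sqrt_le_sqrt (hle p hp))

lemma tendsto_integral_inv_sqrt_sq_add {f : ℝ → ℝ} {b : ℝ} (hb : 0 ≤ b) (hf : Measurable f)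
    (hpos : ∀ p ∈ Ioc 0 b, 0 < f p) (hint : IntervalIntegrable (fun p => (√(f p))⁻¹) volume 0 b) :
    Tendsto (fun s => ∫ p in 0..b, (√(s ^ 2 + f p))⁻¹) (𝓝 0) (𝓝 (∫ p in 0..b, (√(f p))⁻¹)) := by
  refine intervalIntegral.tendsto_integral_filter_of_dominated_convergence _
    (Eventually.of_forall fun s => (hf.const_add _).sqrt.inv.aestronglyMeasurable)
    (Eventually.of_forall fun s => ?_) hint ?_
  all_goals rw [uIoc_of_le hb]; refine Eventually.of_forall fun p hp => ?_
  · rw [Real.norm_of_nonneg (by positivity)]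
    exact inv_anti₀ (Real.sqrt_pos.2 (hpos p hp)) (Real.sqrt_le_sqrt (by nlinarith))
  · have hcont : ContinuousAt (fun s : ℝ => (√(s ^ 2 + f p))⁻¹) 0 :=
      (by fun_prop : Continuous fun s : ℝ => √(s ^ 2 + f p)).continuousAt.inv₀
        (Real.sqrt_pos.2 (by simpa using hpos p hp)).ne'
    simpa using hcont.tendsto

lemma Omeg_hasDerivAt {ω : ℝ → ℝ} (hω : Continuous ω) (p : ℝ) : HasDerivAt (Omeg ω) (ω p) p :=
  (hω.integral_hasStrictDerivAt 0 p).hasDerivAt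

lemma Omeg_zero (ω : ℝ → ℝ) : Omeg ω 0 = 0 := intervalIntegral.integral_same

lemma s0_eq_zero {ω : ℝ → ℝ} (hneg : ∀ p ∈ Ioc (0:ℝ) 1, Omeg ω p < 0) : s0 ω = 0 := by
  have hmax : IsGreatest ((fun p => 2 * Omeg ω p) '' Icc (0:ℝ) 1) 0 := by
    refine ⟨⟨0, left_mem_Icc.2 zero_le_one, by simp [Omeg_zero]⟩, ?_⟩
    rintro _ ⟨p, hp, rfl⟩
    rcases hp.1.eq_or_lt with rfl | hp0
    · simp [Omeg_zero]
    · linarith [hneg p ⟨hp0, hp.2⟩]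
  rw [s0, hmax.csSup_eq, Real.sqrt_zero]

/-- under condition (ii) one has `s₀ = 0`, the improper integral
`d₀ = ∫₀¹ (−2Ω(p))^{-1/2} dp` is finite, `d(s) → d₀` and `R(s) → R₀ = d₀ − Ω(1)` as
`s → 0+`. -/
theorem stmt3 (ω : ℝ → ℝ) (hω : Continuous ω)
    (hii₁ : ∀ p ∈ Ioc (0:ℝ) 1, Omeg ω p < 0) (hii₂ : ω 0 ≠ 0) :
    s0 ω = 0 ∧
    IntervalIntegrable (fun p => (Real.sqrt (-(2 * Omeg ω p)))⁻¹) volume 0 1 ∧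
    Tendsto (dd ω) (nhdsWithin 0 (Ioi 0))
      (nhds (∫ p in (0:ℝ)..1, (Real.sqrt (-(2 * Omeg ω p)))⁻¹)) ∧
    Tendsto (RR ω) (nhdsWithin 0 (Ioi 0))
      (nhds ((∫ p in (0:ℝ)..1, (Real.sqrt (-(2 * Omeg ω p)))⁻¹) - Omeg ω 1)) := by
  set f : ℝ → ℝ := fun p => -(2 * Omeg ω p)
  have hΩ : Continuous (Omeg ω) := continuous_iff_continuousAt.2 fun p =>
    (Omeg_hasDerivAt hω p).continuousAt
  have hf : Continuous f := by fun_prop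
  have hpos : ∀ p ∈ Ioc (0:ℝ) 1, 0 < f p := fun p hp => by linarith [hii₁ p hp]
  obtain ⟨c, hc, hle⟩ := exists_pos_mul_le_of_hasDerivAt one_pos hf
    (by simp [f, Omeg_zero]) ((Omeg_hasDerivAt hω 0).const_mul 2).neg (by simpa using hii₂) hpos
  have hint := intervalIntegrable_inv_sqrt_of_mul_le zero_le_one hc hf.measurable hle
  have hdd : Tendsto (dd ω) (𝓝 0) (𝓝 (∫ p in (0:ℝ)..1, (√(f p))⁻¹)) := by
    convert tendsto_integral_inv_sqrt_sq_add zero_le_one hf.measurable hpos hint using 1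
    funext s
    simp only [dd, Hfun, Hp, f, sub_eq_add_neg]
  have hRR : Tendsto (RR ω) (𝓝 0) (𝓝 (0 ^ 2 / 2 - Omeg ω 1 + ∫ p in (0:ℝ)..1, (√(f p))⁻¹)) :=
    ((continuous_pow 2).div_const 2 |>.sub continuous_const |>.tendsto 0).add hdd
  refine ⟨s0_eq_zero hii₁, hint, hdd.mono_left nhdsWithin_le_nhds, ?_⟩
  convert hRR.mono_left nhdsWithin_le_nhds using 2
  ring
end

section
/- The function I(s) = ∫₀¹ (s² − 2Ω(p))^{-3/2} dp is continuous and strictly decreasing on (s₀, ∞), and I(s) → 0 as s → ∞. Consequently there is at most one s_c ∈ (s₀, ∞) with I(s_c) = 1, and if such s_c exists then R is strictly decreasing on (s₀, s_c) and strictly increasing on (s_c, ∞). -/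
/-!
For `s > s₀` and `p ∈ [0, 1]` one has `s² − 2Ω(p) ≥ s² − s₀² > 0`, so the integrand
`(s² − 2Ω(p))^{-3/2}` of `I` is strictly decreasing in `s` and bounded by `(t² − s₀²)^{-3/2}`
for all `s ≥ t > s₀`. This gives the monotonicity and the limit of `I`, and the same locally
uniform bound allows dominated convergence: `I` is continuous, and `d` may be differentiated
under the integral sign, `d'(s) = -s I(s)`. Hence `R'(s) = s (1 − I(s))`, which changes sign
exactly where `I` crosses `1`.
-/

open MeasureTheory Set Filter

open intervalIntegral

/-- The paper's `I(s)`. -/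
noncomputable def II (ω : ℝ → ℝ) (s : ℝ) : ℝ := ∫ p in (0:ℝ)..1, Hp ω p s ^ 3

variable {ω : ℝ → ℝ}

lemma continuous_Omeg (hω : Continuous ω) : Continuous (Omeg ω) :=
  continuous_primitive (fun a b => hω.intervalIntegrable a b) 0

lemma s0_nonneg (ω : ℝ → ℝ) : 0 ≤ s0 ω := Real.sqrt_nonneg _

lemma two_mul_Omeg_le_s0_sq (hω : Continuous ω) {p : ℝ} (hp : p ∈ Icc (0:ℝ) 1) :
    2 * Omeg ω p ≤ s0 ω ^ 2 := by
  have hbdd : BddAbove ((fun p => 2 * Omeg ω p) '' Icc (0:ℝ) 1) :=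
    (isCompact_Icc.image (continuous_const.mul (continuous_Omeg hω))).bddAbove
  have hS_nonneg : 0 ≤ sSup ((fun p => 2 * Omeg ω p) '' Icc (0:ℝ) 1) := by
    simpa [Omeg] using le_csSup hbdd (mem_image_of_mem _ (left_mem_Icc.2 zero_le_one))
  rw [s0, Real.sq_sqrt hS_nonneg]
  exact le_csSup hbdd (mem_image_of_mem _ hp)

lemma sq_sub_two_mul_Omeg_pos (hω : Continuous ω) {p s : ℝ} (hp : p ∈ Icc (0:ℝ) 1)
    (hs : s0 ω < s) : 0 < s ^ 2 - 2 * Omeg ω p := by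
  nlinarith [two_mul_Omeg_le_s0_sq hω hp, s0_nonneg ω]

lemma Hp_nonneg (ω : ℝ → ℝ) (p s : ℝ) : 0 ≤ Hp ω p s := inv_nonneg.2 (Real.sqrt_nonneg _)

lemma Hp_pow_le (hω : Continuous ω) {p s t : ℝ} (hp : p ∈ Icc (0:ℝ) 1) (ht : s0 ω < t)
    (hts : t ≤ s) (n : ℕ) : Hp ω p s ^ n ≤ (√(t ^ 2 - s0 ω ^ 2))⁻¹ ^ n := by
  have h0 := s0_nonneg ω
  have hpos : 0 < t ^ 2 - s0 ω ^ 2 := by nlinarith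
  have hle : t ^ 2 - s0 ω ^ 2 ≤ s ^ 2 - 2 * Omeg ω p := by
    nlinarith [two_mul_Omeg_le_s0_sq hω hp]
  exact pow_le_pow_left₀ (Hp_nonneg ω p s)
    (inv_anti₀ (Real.sqrt_pos.2 hpos) (Real.sqrt_le_sqrt hle)) n

lemma Hp_strictAntiOn (hω : Continuous ω) {p : ℝ} (hp : p ∈ Icc (0:ℝ) 1) :
    StrictAntiOn (Hp ω p) (Ioi (s0 ω)) := fun s₁ h₁ s₂ _ h12 =>
  have hpos := sq_sub_two_mul_Omeg_pos hω hp h₁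
  inv_strictAnti₀ (Real.sqrt_pos.2 hpos)
    (Real.sqrt_lt_sqrt hpos.le (by nlinarith [s0_nonneg ω, mem_Ioi.1 h₁]))

lemma measurable_Hp (hω : Continuous ω) (s : ℝ) : Measurable fun p => Hp ω p s :=
  (Real.continuous_sqrt.comp
    (continuous_const.sub (continuous_const.mul (continuous_Omeg hω)))).measurable.inv

lemma continuousOn_Hp (hω : Continuous ω) {s : ℝ} (hs : s0 ω < s) :
    ContinuousOn (fun p => Hp ω p s) (Icc (0:ℝ) 1) :=
  (Real.continuous_sqrt.comp (continuous_const.sub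
    (continuous_const.mul (continuous_Omeg hω)))).continuousOn.inv₀
      fun _ hp => (Real.sqrt_pos.2 (sq_sub_two_mul_Omeg_pos hω hp hs)).ne'

lemma intervalIntegrable_Hp_pow (hω : Continuous ω) {s : ℝ} (hs : s0 ω < s) (n : ℕ) :
    IntervalIntegrable (fun p => Hp ω p s ^ n) volume 0 1 :=
  ((continuousOn_Hp hω hs).pow n).intervalIntegrable_of_Icc zero_le_one

lemma hasDerivAt_Hp {p s : ℝ} (hu : 0 < s ^ 2 - 2 * Omeg ω p) :
    HasDerivAt (Hp ω p) (-(s * Hp ω p s ^ 3)) s := by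
  have hsqrt : HasDerivAt (fun s => √(s ^ 2 - 2 * Omeg ω p))
      ((2 * s) / (2 * √(s ^ 2 - 2 * Omeg ω p))) s := by
    simpa using ((hasDerivAt_pow 2 s).sub_const (2 * Omeg ω p)).sqrt hu.ne'
  refine (hsqrt.inv (Real.sqrt_pos.2 hu).ne').congr_deriv ?_
  have : √(s ^ 2 - 2 * Omeg ω p) ^ 2 = s ^ 2 - 2 * Omeg ω p := Real.sq_sqrt hu.le
  unfold Hp
  field_simp

lemma strictAntiOn_II (hω : Continuous ω) : StrictAntiOn (II ω) (Ioi (s0 ω)) := by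
  intro s₁ h₁ s₂ h₂ h12
  have hlt : ∀ p ∈ Icc (0:ℝ) 1, Hp ω p s₂ ^ 3 < Hp ω p s₁ ^ 3 := fun p hp =>
    pow_lt_pow_left₀ (Hp_strictAntiOn hω hp h₁ h₂ h12) (Hp_nonneg ω p s₂) three_ne_zero
  exact integral_lt_integral_of_continuousOn_of_le_of_exists_lt zero_lt_one
    ((continuousOn_Hp hω h₂).pow 3) ((continuousOn_Hp hω h₁).pow 3)
    (fun p hp => (hlt p (Ioc_subset_Icc_self hp)).le)
    ⟨0, left_mem_Icc.2 zero_le_one, hlt 0 (left_mem_Icc.2 zero_le_one)⟩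

lemma II_le (hω : Continuous ω) {s : ℝ} (hs : s0 ω < s) :
    II ω s ≤ (√(s ^ 2 - s0 ω ^ 2))⁻¹ ^ 3 := by
  simpa [II] using integral_mono_on zero_le_one (intervalIntegrable_Hp_pow hω hs 3)
    intervalIntegrable_const fun p hp => Hp_pow_le hω hp hs le_rfl 3

lemma tendsto_II_atTop (hω : Continuous ω) : Tendsto (II ω) atTop (nhds 0) := by
  have hbound : Tendsto (fun s : ℝ => (√(s ^ 2 - s0 ω ^ 2))⁻¹ ^ 3) atTop (nhds 0) := by
    simpa [sub_eq_add_neg] using ((tendsto_inv_atTop_zero.comp (Real.tendsto_sqrt_atTop.comp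
      (tendsto_atTop_add_const_right atTop _ (tendsto_pow_atTop two_ne_zero)))).pow 3)
  refine squeeze_zero' (.of_forall fun s => integral_nonneg zero_le_one
    fun p _ => pow_nonneg (Hp_nonneg ω p s) 3) ?_ hbound
  filter_upwards [eventually_gt_atTop (s0 ω)] with s hs using II_le hω hs

lemma mem_Icc_of_mem_uIoc {a b p : ℝ} (hab : a ≤ b) (hp : p ∈ uIoc a b) : p ∈ Icc a b :=
  Ioc_subset_Icc_self (uIoc_of_le hab ▸ hp)

lemma continuousOn_II (hω : Continuous ω) : ContinuousOn (II ω) (Ioi (s0 ω)) := by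
  intro x (hx : s0 ω < x)
  obtain ⟨t, ht, htx⟩ := exists_between hx
  refine (continuousAt_of_dominated_interval (bound := fun _ => (√(t ^ 2 - s0 ω ^ 2))⁻¹ ^ 3)
    (.of_forall fun s => ((measurable_Hp hω s).pow_const 3).aestronglyMeasurable) ?_
    intervalIntegrable_const ?_).continuousWithinAt
  · filter_upwards [Ioi_mem_nhds htx] with s hs
    refine .of_forall fun p hp => ?_
    rw [Real.norm_of_nonneg (pow_nonneg (Hp_nonneg ω p s) 3)]
    exact Hp_pow_le hω (mem_Icc_of_mem_uIoc zero_le_one hp) ht (le_of_lt hs) 3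
  · exact .of_forall fun p hp =>
      (hasDerivAt_Hp (sq_sub_two_mul_Omeg_pos hω (mem_Icc_of_mem_uIoc zero_le_one hp) hx)).continuousAt.pow 3

lemma hasDerivAt_dd (hω : Continuous ω) {x : ℝ} (hx : s0 ω < x) :
    HasDerivAt (dd ω) (-(x * II ω x)) x := by
  obtain ⟨t, ht, htx⟩ := exists_between hx
  have H := hasDerivAt_integral_of_dominated_loc_of_deriv_le
    (F := fun s p => Hp ω p s) (F' := fun s p => -(s * Hp ω p s ^ 3))
    (bound := fun _ => (x + 1) * (√(t ^ 2 - s0 ω ^ 2))⁻¹ ^ 3)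
    (Ioo_mem_nhds htx (lt_add_one x))
    (.of_forall fun s => (measurable_Hp hω s).aestronglyMeasurable)
    (by simpa using intervalIntegrable_Hp_pow hω hx 1)
    (((measurable_Hp hω x).pow_const 3).const_mul x).neg.aestronglyMeasurable
    ?_ intervalIntegrable_const
    (.of_forall fun p hp s hs => hasDerivAt_Hp
      (sq_sub_two_mul_Omeg_pos hω (mem_Icc_of_mem_uIoc zero_le_one hp) (ht.trans hs.1)))
  · rw [intervalIntegral.integral_neg, intervalIntegral.integral_const_mul] at H
    exact H.2
  · refine .of_forall fun p hp s hs => ?_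
    have hs0 : 0 < s := (s0_nonneg ω).trans_lt (ht.trans hs.1)
    rw [norm_neg, Real.norm_of_nonneg (mul_nonneg hs0.le (pow_nonneg (Hp_nonneg ω p s) 3))]
    exact mul_le_mul hs.2.le (Hp_pow_le hω (mem_Icc_of_mem_uIoc zero_le_one hp) ht hs.1.le 3)
      (pow_nonneg (Hp_nonneg ω p s) 3) (by linarith [s0_nonneg ω])

lemma hasDerivAt_RR (hω : Continuous ω) {x : ℝ} (hx : s0 ω < x) :
    HasDerivAt (RR ω) (x * (1 - II ω x)) x := by
  have h := (((hasDerivAt_pow 2 x).div_const 2).sub_const (Omeg ω 1)).add (hasDerivAt_dd hω hx)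
  exact h.congr_deriv (by push_cast; ring)

lemma strictAntiOn_RR (hω : Continuous ω) {D : Set ℝ} (hD : Convex ℝ D)
    (hDs : D ⊆ Ioi (s0 ω)) (hI : ∀ s ∈ D, 1 < II ω s) : StrictAntiOn (RR ω) D :=
  strictAntiOn_of_hasDerivWithinAt_neg hD
    (fun _ hs => (hasDerivAt_RR hω (hDs hs)).continuousAt.continuousWithinAt)
    (fun _ hs => (hasDerivAt_RR hω (hDs (interior_subset hs))).hasDerivWithinAt)
    fun s hs => mul_neg_of_pos_of_neg ((s0_nonneg ω).trans_lt (hDs (interior_subset hs)))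
      (sub_neg.2 (hI s (interior_subset hs)))

lemma strictMonoOn_RR (hω : Continuous ω) {D : Set ℝ} (hD : Convex ℝ D)
    (hDs : D ⊆ Ioi (s0 ω)) (hI : ∀ s ∈ D, II ω s < 1) : StrictMonoOn (RR ω) D :=
  strictMonoOn_of_hasDerivWithinAt_pos hD
    (fun _ hs => (hasDerivAt_RR hω (hDs hs)).continuousAt.continuousWithinAt)
    (fun _ hs => (hasDerivAt_RR hω (hDs (interior_subset hs))).hasDerivWithinAt)
    fun s hs => mul_pos ((s0_nonneg ω).trans_lt (hDs (interior_subset hs)))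
      (sub_pos.2 (hI s (interior_subset hs)))

/-- `I(s) = ∫₀¹ (s² − 2Ω(p))^{-3/2} dp` is continuous and strictly decreasing
on `(s₀, ∞)` and tends to `0` at `∞`; hence there is at most one `s_c` with `I(s_c) = 1`,
and for such `s_c` the function `R` is strictly decreasing on `(s₀, s_c)` and strictly
increasing on `(s_c, ∞)`. -/
theorem stmt5 (ω : ℝ → ℝ) (hω : Continuous ω) :
    ContinuousOn (fun s => ∫ p in (0:ℝ)..1, (Hp ω p s) ^ 3) (Ioi (s0 ω)) ∧
    StrictAntiOn (fun s => ∫ p in (0:ℝ)..1, (Hp ω p s) ^ 3) (Ioi (s0 ω)) ∧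
    Tendsto (fun s => ∫ p in (0:ℝ)..1, (Hp ω p s) ^ 3) atTop (nhds 0) ∧
    (∀ s₁ ∈ Ioi (s0 ω), ∀ s₂ ∈ Ioi (s0 ω),
      (∫ p in (0:ℝ)..1, (Hp ω p s₁) ^ 3) = 1 →
      (∫ p in (0:ℝ)..1, (Hp ω p s₂) ^ 3) = 1 → s₁ = s₂) ∧
    (∀ sc ∈ Ioi (s0 ω), (∫ p in (0:ℝ)..1, (Hp ω p sc) ^ 3) = 1 →
      StrictAntiOn (RR ω) (Ioo (s0 ω) sc) ∧ StrictMonoOn (RR ω) (Ioi sc)) := by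
  have hanti := strictAntiOn_II hω
  refine ⟨continuousOn_II hω, hanti, tendsto_II_atTop hω,
    fun s₁ h₁ s₂ h₂ e₁ e₂ => hanti.injOn h₁ h₂ (e₁.trans e₂.symm), fun sc hsc hIsc => ⟨?_, ?_⟩⟩
  · refine strictAntiOn_RR hω (convex_Ioo _ _) Ioo_subset_Ioi_self fun s hs => ?_
    simpa only [II, hIsc] using hanti hs.1 hsc hs.2
  · have hsub : Ioi sc ⊆ Ioi (s0 ω) := Ioi_subset_Ioi (le_of_lt hsc)
    refine strictMonoOn_RR hω (convex_Ioi _) hsub fun s hs => ?_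
    simpa only [II, hIsc] using hanti hsc (hsub hs) hs
end
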